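/- Let ω = e^{2πi/3}. The three polynomials f₀ = XYZ, f₁ = X³+Y³+Z³ and f₂ = (X³+ωY³+ω²Z³)(X³+ω²Y³+ωZ³) in ℂ[X,Y,Z] are algebraically independent over ℂ. -/
import Mathlib

noncomputable section
open MvPolynomial Complex

/-- ω = e^{2πi/3}, a primitive cube root of unity. -/
def ω : ℂ := Complex.exp (2 * Real.pi * Complex.I / 3)

lemma hωprim : IsPrimitiveRoot ω 3 := by
  have := Complex.isPrimitiveRoot_exp 3 (by norm_num)
  simpa [ω] using this

lemma hω3 : ω ^ 3 = 1 := hωprim.pow_eq_one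

lemma hωsum : ω ^ 2 + ω + 1 = 0 := by
  have h1 : ω ≠ 1 := hωprim.ne_one (by norm_num)
  have h : (ω - 1) * (ω ^ 2 + ω + 1) = 0 := by linear_combination hω3
  rcases mul_eq_zero.mp h with h' | h'
  · exact (h1 (sub_eq_zero.mp h')).elim
  · exact h'

lemma surj (a b c : ℂ) : ∃ x y z : ℂ,
    x * y * z = a ∧ x ^ 3 + y ^ 3 + z ^ 3 = b ∧
    (x ^ 3 + ω * y ^ 3 + ω ^ 2 * z ^ 3) * (x ^ 3 + ω ^ 2 * y ^ 3 + ω * z ^ 3) = c := by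
  -- find a root p of the cubic t³ - b t² + ((b²-c)/3) t - a³
  obtain ⟨p, hp⟩ : ∃ p : ℂ, p ^ 3 - b * p ^ 2 + (b ^ 2 - c) / 3 * p - a ^ 3 = 0 := by
    obtain ⟨p, hp⟩ := Complex.exists_root
      (f := Polynomial.C 1 * Polynomial.X ^ 3 + Polynomial.C (-b) * Polynomial.X ^ 2 +
        Polynomial.C ((b ^ 2 - c) / 3) * Polynomial.X + Polynomial.C (-(a ^ 3)))
      (by rw [Polynomial.degree_cubic one_ne_zero]; norm_num)
    refine ⟨p, ?_⟩
    have := hp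
    simp [Polynomial.IsRoot] at this
    linear_combination this
  -- find q, r with q + r = b - p and q * r = (b²-c)/3 - p*(b-p)
  obtain ⟨d, hd⟩ := IsAlgClosed.exists_pow_nat_eq
    ((b - p) ^ 2 - 4 * ((b ^ 2 - c) / 3 - p * (b - p))) (n := 2) (by norm_num)
  set q : ℂ := ((b - p) + d) / 2 with hqdef
  set r : ℂ := ((b - p) - d) / 2 with hrdef
  have hqadd : q + r = b - p := by rw [hqdef, hrdef]; ring
  have hqmul : q * r = (b ^ 2 - c) / 3 - p * (b - p) := by
    rw [hqdef, hrdef]; linear_combination (-1/4 : ℂ) * hd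
  -- cube roots
  obtain ⟨x, hx⟩ := IsAlgClosed.exists_pow_nat_eq p (n := 3) (by norm_num)
  obtain ⟨y, hy⟩ := IsAlgClosed.exists_pow_nat_eq q (n := 3) (by norm_num)
  obtain ⟨z, hz⟩ := IsAlgClosed.exists_pow_nat_eq r (n := 3) (by norm_num)
  have h3 : (x * y * z) ^ 3 = a ^ 3 := by
    linear_combination y ^ 3 * z ^ 3 * hx + p * z ^ 3 * hy + p * q * hz + p * hqmul + hp
  -- fix the product to be exactly a
  obtain ⟨x', hx', hxyz⟩ : ∃ x' : ℂ, x' ^ 3 = p ∧ x' * y * z = a := by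
    by_cases ha : a = 0
    · refine ⟨x, hx, ?_⟩
      have : (x * y * z) ^ 3 = 0 := by rw [h3, ha]; ring
      rw [pow_eq_zero_iff (by norm_num : (3:ℕ) ≠ 0)] at this
      rw [this, ha]
    · set ζ : ℂ := x * y * z / a with hζdef
      have hζ3 : ζ ^ 3 = 1 := by
        rw [hζdef, div_pow, h3, div_self (pow_ne_zero 3 ha)]
      refine ⟨x * ζ ^ 2, ?_, ?_⟩
      · have : (x * ζ ^ 2) ^ 3 = x ^ 3 * (ζ ^ 3) ^ 2 := by ring
        rw [this, hζ3, hx]; ring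
      · have hxyz' : x * y * z = a * ζ := by
          rw [hζdef]; field_simp
        calc x * ζ ^ 2 * y * z = (x * y * z) * ζ ^ 2 := by ring
          _ = a * ζ ^ 3 := by rw [hxyz']; ring
          _ = a := by rw [hζ3]; ring
  refine ⟨x', y, z, hxyz, ?_, ?_⟩
  · linear_combination hx' + hy + hz + hqadd
  · have key : (p + ω * q + ω ^ 2 * r) * (p + ω ^ 2 * q + ω * r)
        = p ^ 2 + q ^ 2 + r ^ 2 - p * q - q * r - r * p := by
      linear_combination (p * q + p * r + q * r) * hωsum + (q ^ 2 + r ^ 2 + ω * q * r) * hω3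
    rw [hx', hy, hz, key]
    linear_combination (q + r + b - 2 * p) * hqadd + (-3 : ℂ) * hqmul

/-- The three polynomials f₀ = XYZ, f₁ = X³+Y³+Z³,
f₂ = (X³+ωY³+ω²Z³)(X³+ω²Y³+ωZ³) are algebraically independent over ℂ. -/
theorem f_algebraically_independent :
    AlgebraicIndependent ℂ
      (![X 0 * X 1 * X 2,
         X 0 ^ 3 + X 1 ^ 3 + X 2 ^ 3,
         (X 0 ^ 3 + C ω * X 1 ^ 3 + C (ω ^ 2) * X 2 ^ 3) *
           (X 0 ^ 3 + C (ω ^ 2) * X 1 ^ 3 + C ω * X 2 ^ 3)] :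
        Fin 3 → MvPolynomial (Fin 3) ℂ) := by
  rw [algebraicIndependent_iff]
  intro P hP
  apply MvPolynomial.funext
  intro v
  rw [map_zero]
  obtain ⟨x, y, z, h0, h1, h2⟩ := surj (v 0) (v 1) (v 2)
  set f : Fin 3 → MvPolynomial (Fin 3) ℂ :=
    ![X 0 * X 1 * X 2,
      X 0 ^ 3 + X 1 ^ 3 + X 2 ^ 3,
      (X 0 ^ 3 + C ω * X 1 ^ 3 + C (ω ^ 2) * X 2 ^ 3) *
        (X 0 ^ 3 + C (ω ^ 2) * X 1 ^ 3 + C ω * X 2 ^ 3)] with hf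
  have key : (aeval (![x, y, z] : Fin 3 → ℂ)) (aeval f P)
      = aeval (fun i => (aeval (![x, y, z] : Fin 3 → ℂ)) (f i)) P :=
    comp_aeval_apply _ (aeval (![x, y, z] : Fin 3 → ℂ)) P
  rw [hP, map_zero] at key
  have hfun : (fun i => (aeval (![x, y, z] : Fin 3 → ℂ)) (f i)) = v := by
    funext i
    fin_cases i <;>
      simp [hf, Matrix.cons_val_zero, Matrix.cons_val_one] <;>
      [exact h0; exact h1; exact (by linear_combination h2)]
  rw [hfun] at key
  have : aeval v P = eval v P := by
    rw [aeval_def, eval, ← coe_eval₂Hom]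
    congr 1
  rw [← this, key]
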